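/- arXiv:2505.00544 — 6 statements merged into one kernel-verified Lean document; each statement's English description precedes it below -/
import Mathlib

section
/- Let p be a univariate real polynomial of degree at most d. Then ‖p‖_∞ ≤ ‖p‖_{1,cheb} ≤ √(2(d+1)) · ‖p‖_∞. -/
/-!
Since `|T_k| ≤ 1` on `[-1, 1]`, the first inequality is the triangle inequality. For the second,
the `T_k` are orthogonal for the Chebyshev weight `dx / √(1 - x²)`, with squared norm `π` for
`k = 0` and `π / 2` otherwise. Parseval gives `(π / 2) ∑ c_k² ≤ ∫ p² dμ_T`, and the substitution
`x = cos θ` bounds this integral by `π ‖p‖_∞²`. Cauchy–Schwarz, `(∑ |c_k|)² ≤ (d + 1) ∑ c_k²`,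
finishes.
-/

open Polynomial Polynomial.Chebyshev Real MeasureTheory

noncomputable def supNormIcc (p : ℝ[X]) : ℝ := ⨆ x : Set.Icc (-1 : ℝ) 1, |p.eval (x : ℝ)|

lemma abs_eval_le_supNormIcc (p : ℝ[X]) {x : ℝ} (hx : x ∈ Set.Icc (-1 : ℝ) 1) :
    |p.eval x| ≤ supNormIcc p := by
  have hbdd : BddAbove (Set.range fun y : Set.Icc (-1 : ℝ) 1 => |p.eval (y : ℝ)|) := by
    refine ((isCompact_Icc (a := -1) (b := 1)).image p.continuous.abs).bddAbove.mono ?_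
    rintro _ ⟨y, rfl⟩
    exact ⟨y, y.2, rfl⟩
  exact le_ciSup hbdd ⟨x, hx⟩

lemma supNormIcc_nonneg (p : ℝ[X]) : 0 ≤ supNormIcc p :=
  (abs_nonneg _).trans (abs_eval_le_supNormIcc p (x := 0) (by norm_num))

lemma supNormIcc_le_sum_abs (s : Finset ℕ) (c : ℕ → ℝ) :
    supNormIcc (∑ k ∈ s, c k • T ℝ k) ≤ ∑ k ∈ s, |c k| := by
  have : Nonempty (Set.Icc (-1 : ℝ) 1) := ⟨⟨0, by norm_num⟩⟩
  refine ciSup_le fun ⟨x, hx⟩ => ?_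
  change |eval x _| ≤ _
  rw [← cos_arccos hx.1 hx.2, eval_finsetSum]
  refine (Finset.abs_sum_le_sum_abs _ _).trans (Finset.sum_le_sum fun k _ => ?_)
  rw [eval_smul, smul_eq_mul, abs_mul, ← Int.cast_natCast, T_real_cos]
  exact mul_le_of_le_one_right (abs_nonneg _) (abs_cos_le_one _)

lemma pi_div_two_le_integral_T_real_mul_self_measureT (n : ℕ) :
    π / 2 ≤ ∫ x, (T ℝ n).eval x * (T ℝ n).eval x ∂measureT := by
  rcases eq_or_ne n 0 with rfl | hn
  · rw [Nat.cast_zero, integral_eval_T_real_mul_self_measureT_zero]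
    linarith [pi_pos]
  · rw [integral_T_real_mul_self_measureT_of_ne_zero hn]

lemma integral_sq_eval_sum_T_measureT (s : Finset ℕ) (c : ℕ → ℝ) :
    ∫ x, (∑ k ∈ s, c k • T ℝ k).eval x ^ 2 ∂measureT =
      ∑ k ∈ s, c k ^ 2 * ∫ x, (T ℝ k).eval x * (T ℝ k).eval x ∂measureT := by
  have hint : ∀ j k : ℕ, Integrable (fun x => c j * (T ℝ j).eval x * (c k * (T ℝ k).eval x))
      measureT := fun j k => integrable_measureT (by fun_prop)
  simp_rw [eval_finsetSum, eval_smul, smul_eq_mul, sq, Finset.sum_mul_sum]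
  calc ∫ x, ∑ j ∈ s, ∑ k ∈ s, c j * (T ℝ j).eval x * (c k * (T ℝ k).eval x) ∂measureT
      = ∑ j ∈ s, ∑ k ∈ s, c j * c k * ∫ x, (T ℝ j).eval x * (T ℝ k).eval x ∂measureT := by
        rw [integral_finsetSum _ fun j _ => integrable_finsetSum _ fun k _ => hint j k]
        refine Finset.sum_congr rfl fun j _ => ?_
        rw [integral_finsetSum _ fun k _ => hint j k]
        refine Finset.sum_congr rfl fun k _ => ?_
        rw [← integral_const_mul]
        congr 1 with x
        ring
    _ = ∑ k ∈ s, c k * c k * ∫ x, (T ℝ k).eval x * (T ℝ k).eval x ∂measureT := by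
        refine Finset.sum_congr rfl fun j hj => Finset.sum_eq_single_of_mem j hj fun k _ hkj => ?_
        rw [integral_eval_T_real_mul_eval_T_real_measureT_of_ne (Ne.symm hkj), mul_zero]

lemma integral_sq_eval_measureT_le (p : ℝ[X]) :
    ∫ x, p.eval x ^ 2 ∂measureT ≤ π * supNormIcc p ^ 2 := by
  rw [integral_measureT_eq_integral_cos]
  calc ∫ θ in 0..π, p.eval (cos θ) ^ 2 ≤ ∫ _ in 0..π, supNormIcc p ^ 2 := by
        refine intervalIntegral.integral_mono_on pi_pos.le ((by fun_prop : Continuous _).intervalIntegrable _ _)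
          intervalIntegrable_const fun θ _ => ?_
        rw [← sq_abs]
        exact pow_le_pow_left₀ (abs_nonneg _)
          (abs_eval_le_supNormIcc p ⟨neg_one_le_cos θ, cos_le_one θ⟩) 2
    _ = π * supNormIcc p ^ 2 := by simp

lemma sum_sq_le_two_mul_supNormIcc_sq (s : Finset ℕ) (c : ℕ → ℝ) :
    ∑ k ∈ s, c k ^ 2 ≤ 2 * supNormIcc (∑ k ∈ s, c k • T ℝ k) ^ 2 := by
  have key : π / 2 * ∑ k ∈ s, c k ^ 2 ≤ π * supNormIcc (∑ k ∈ s, c k • T ℝ k) ^ 2 :=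
    calc π / 2 * ∑ k ∈ s, c k ^ 2
        ≤ ∑ k ∈ s, c k ^ 2 * ∫ x, (T ℝ k).eval x * (T ℝ k).eval x ∂measureT := by
          rw [Finset.mul_sum]
          exact Finset.sum_le_sum fun k _ => by
            rw [mul_comm]
            exact mul_le_mul_of_nonneg_left
              (pi_div_two_le_integral_T_real_mul_self_measureT k) (sq_nonneg _)
      _ = ∫ x, (∑ k ∈ s, c k • T ℝ k).eval x ^ 2 ∂measureT :=
          (integral_sq_eval_sum_T_measureT s c).symm
      _ ≤ _ := integral_sq_eval_measureT_le _
  nlinarith [pi_pos]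

/-- For a univariate real polynomial `p` of degree at most `d`, written in the
Chebyshev basis as `p = ∑_{k=0}^d c_k T_k`, one has
`‖p‖_∞ ≤ ‖p‖_{1,cheb} ≤ √(2(d+1)) ‖p‖_∞`, where `‖p‖_∞ = sup_{x ∈ [-1,1]} |p(x)|` and
`‖p‖_{1,cheb} = ∑_{k=0}^d |c_k|`. -/
theorem cheb_norm_comparison (d : ℕ) (p : Polynomial ℝ) (c : ℕ → ℝ)
    (hp : p = ∑ k ∈ Finset.range (d + 1), c k • Chebyshev.T ℝ k) :
    (⨆ x : Set.Icc (-1 : ℝ) 1, |p.eval (x : ℝ)|) ≤ ∑ k ∈ Finset.range (d + 1), |c k| ∧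
      ∑ k ∈ Finset.range (d + 1), |c k| ≤
        Real.sqrt (2 * (d + 1)) * ⨆ x : Set.Icc (-1 : ℝ) 1, |p.eval (x : ℝ)| := by
  change supNormIcc p ≤ _ ∧ _ ≤ _ * supNormIcc p
  subst hp
  refine ⟨supNormIcc_le_sum_abs _ c, ?_⟩
  have hcs := sq_sum_le_card_mul_sum_sq (s := Finset.range (d + 1)) (f := fun k => |c k|)
  simp only [sq_abs, Finset.card_range] at hcs
  rw [← sqrt_sq (supNormIcc_nonneg _), ← sqrt_mul (by positivity),
    le_sqrt (Finset.sum_nonneg fun k _ => abs_nonneg _) (by positivity)]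
  calc (∑ k ∈ Finset.range (d + 1), |c k|) ^ 2
      ≤ (d + 1 : ℝ) * ∑ k ∈ Finset.range (d + 1), c k ^ 2 := by exact_mod_cast hcs
    _ ≤ (d + 1 : ℝ) * (2 * supNormIcc (∑ k ∈ Finset.range (d + 1), c k • T ℝ k) ^ 2) :=
        mul_le_mul_of_nonneg_left (sum_sq_le_two_mul_supNormIcc_sq _ c) (by positivity)
    _ = _ := by ring
end

section
/- Let p ∈ ℝ[x_1,…,x_n] be a polynomial. Then ‖p‖_{1,cheb} − p belongs to Q(1−x_1², 1−x_2², …, 1−x_n²)_{2·deg(p)}. -/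
/-!
Split `‖p‖_{1,cheb} - p = ∑_α (|c_α| - c_α T_α)` and write each term as
`|c| - c T_α = (|c| / 2) ((1 - s T_α)² + (1 - T_α²))` with `s = sign c`. By the Pell identity
`T_k² + (1 - x²) U_{k-1}² = 1`, the product `1 - T_α² = 1 - ∏ T_{α_i}(x_i)²` telescopes into
`∑_i (1 - x_i²) (U_{α_i - 1}(x_i) ∏_{j < i} T_{α_j}(x_j))²`. Every `α` in the support has
`|α| ≤ deg p`: for `α` of maximal `|α|` the coefficient of `x^α` in `p` is `c_α` times the
product of the leading coefficients of the `T_{α_i}`.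
-/

open Polynomial Finset

/-- The multivariate Chebyshev polynomial `T_α(x) = ∏ i, T_{α i}(x_i)`. -/
noncomputable def chebMv {n : ℕ} (α : Fin n → ℕ) : MvPolynomial (Fin n) ℝ :=
  ∏ i, Polynomial.aeval (MvPolynomial.X i) (Polynomial.Chebyshev.T ℝ (α i))

/-- Membership in the truncated quadratic module `Q(1-x₁², …, 1-xₙ²)_r`. -/
def memCubeQM (n r : ℕ) (p : MvPolynomial (Fin n) ℝ) : Prop :=
  ∃ (σ₀ : MvPolynomial (Fin n) ℝ) (σ : Fin n → MvPolynomial (Fin n) ℝ),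
    IsSumSq σ₀ ∧ (∀ i, IsSumSq (σ i)) ∧ σ₀.totalDegree ≤ r ∧
    (∀ i, (σ i).totalDegree ≤ r - 2) ∧
    p = σ₀ + ∑ i, (1 - MvPolynomial.X i ^ 2) * σ i

namespace Polynomial.Chebyshev

variable (R : Type*) [CommRing R]

theorem T_sq_add_one_sub_X_sq_mul_U_sq (n : ℤ) :
    T R n ^ 2 + (1 - X ^ 2) * U R (n - 1) ^ 2 = 1 := by
  have step (m : ℤ) : T R (m + 1) ^ 2 + (1 - X ^ 2) * U R (m + 1 - 1) ^ 2 =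
      T R m ^ 2 + (1 - X ^ 2) * U R (m - 1) ^ 2 := by
    rw [add_sub_cancel_right]
    have hT := T_eq_X_mul_T_sub_pol_U R (m - 1)
    have hU := U_eq_X_mul_U_add_T R (m - 1)
    rw [sub_add_cancel, show m - 1 + 2 = m + 1 by ring] at hT
    rw [sub_add_cancel] at hU
    rw [hT, hU]
    ring
  induction n using Int.induction_on with
  | zero => simp
  | succ k ih => rw [step, ih]
  | pred k ih => simpa only [sub_add_cancel, ih, eq_comm] using step (-k - 1)

theorem one_sub_aeval_T_sq {A : Type*} [CommRing A] [Algebra R A] (x : A) (n : ℤ) :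
    1 - aeval x (T R n) ^ 2 = (1 - x ^ 2) * aeval x (U R (n - 1)) ^ 2 := by
  have := congrArg (aeval x) (T_sq_add_one_sub_X_sq_mul_U_sq R n)
  simp only [map_add, map_mul, map_pow, map_sub, map_one, aeval_X] at this
  linear_combination -this

end Polynomial.Chebyshev

namespace MvPolynomial

variable {σ R : Type*} [CommSemiring R]

theorem aeval_X_eq_sum_monomial (i : σ) (q : R[X]) :
    Polynomial.aeval (X i) q = ∑ k ∈ q.support, monomial (Finsupp.single i k) (q.coeff k) := by
  rw [Polynomial.aeval_def, eval₂_eq_sum, Polynomial.sum]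
  exact Finset.sum_congr rfl fun k _ => C_mul_X_pow_eq_monomial

theorem totalDegree_aeval_X_le (i : σ) (q : R[X]) :
    (Polynomial.aeval (X i) q : MvPolynomial σ R).totalDegree ≤ q.natDegree := by
  rw [aeval_X_eq_sum_monomial]
  refine totalDegree_finsetSum_le fun k hk => (totalDegree_monomial_le _ _).trans ?_
  rw [Finsupp.sum_single_index rfl]
  exact le_natDegree_of_mem_supp k hk

theorem coeff_prod_aeval_X [Fintype σ] [DecidableEq σ] (q : σ → R[X]) (D : σ →₀ ℕ) :
    coeff D (∏ i, Polynomial.aeval (X i) (q i)) = ∏ i, (q i).coeff (D i) := by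
  simp_rw [aeval_X_eq_sum_monomial, Finset.prod_univ_sum, ← monomial_sum_prod, coeff_sum,
    coeff_monomial]
  have hD (g : σ → ℕ) : ∑ i, Finsupp.single i (g i) = D ↔ g = ⇑D := by
    rw [← Finsupp.coe_univ_sum_single g, DFunLike.coe_fn_eq, Finsupp.coe_univ_sum_single]
  simp_rw [hD, Finset.sum_ite_eq']
  split_ifs with hmem
  · rfl
  · simp only [Fintype.mem_piFinset, Polynomial.mem_support_iff, not_forall, not_not] at hmem
    obtain ⟨i, hi⟩ := hmem
    exact (Finset.prod_eq_zero (Finset.mem_univ i) hi).symm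

end MvPolynomial

section ChebMv

open MvPolynomial

variable {n : ℕ}

theorem totalDegree_prod_aeval_X_T_le (α : Fin n → ℕ) (s : Finset (Fin n)) :
    (∏ i ∈ s, Polynomial.aeval (X i : MvPolynomial (Fin n) ℝ) (Chebyshev.T ℝ (α i))).totalDegree ≤
      ∑ i ∈ s, α i :=
  (totalDegree_finsetProd _ _).trans <| Finset.sum_le_sum fun i _ =>
    (totalDegree_aeval_X_le i _).trans (Chebyshev.natDegree_T ℝ (α i)).le

theorem totalDegree_chebMv_le (α : Fin n → ℕ) : (chebMv α).totalDegree ≤ ∑ i, α i :=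
  totalDegree_prod_aeval_X_T_le α univ

theorem coeff_chebMv (α : Fin n → ℕ) (D : Fin n →₀ ℕ) :
    coeff D (chebMv α) = ∏ i, (Chebyshev.T ℝ (α i)).coeff (D i) :=
  coeff_prod_aeval_X _ D

theorem coeff_chebMv_eq_zero_of_lt {α : Fin n → ℕ} {D : Fin n →₀ ℕ} {i : Fin n}
    (h : α i < D i) : coeff D (chebMv α) = 0 := by
  rw [coeff_chebMv]
  refine Finset.prod_eq_zero (Finset.mem_univ i) (coeff_eq_zero_of_natDegree_lt ?_)
  simpa using h

theorem coeff_chebMv_self_ne_zero (α : Fin n → ℕ) :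
    coeff (Finsupp.equivFunOnFinite.symm α) (chebMv α) ≠ 0 := by
  rw [coeff_chebMv]
  refine Finset.prod_ne_zero_iff.mpr fun i _ => ?_
  have := Chebyshev.leadingCoeff_T ℝ (α i)
  simp only [Finsupp.coe_equivFunOnFinite_symm]
  rw [leadingCoeff, Chebyshev.natDegree_T, Int.natAbs_natCast] at this
  rw [this]
  positivity

theorem sum_le_totalDegree_sum_smul_chebMv {c : (Fin n → ℕ) →₀ ℝ} {α : Fin n → ℕ}
    (hα : α ∈ c.support) : ∑ i, α i ≤ (∑ β ∈ c.support, c β • chebMv β).totalDegree := by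
  obtain ⟨β, hβ, hmax⟩ := c.support.exists_max_image (fun γ => ∑ i, γ i) ⟨α, hα⟩
  refine (hmax α hα).trans ?_
  set D := Finsupp.equivFunOnFinite.symm β
  have hcoeff : coeff D (∑ γ ∈ c.support, c γ • chebMv γ) = c β * coeff D (chebMv β) := by
    rw [MvPolynomial.coeff_sum, Finset.sum_eq_single_of_mem β hβ, MvPolynomial.coeff_smul,
      smul_eq_mul]
    intro γ hγ hne
    obtain ⟨i, hi⟩ : ∃ i, γ i < β i := by
      by_contra! hle
      exact (hmax γ hγ).not_gt (Fintype.sum_strictMono (lt_of_le_of_ne hle (Ne.symm hne)))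
    rw [MvPolynomial.coeff_smul, coeff_chebMv_eq_zero_of_lt (D := D) hi, smul_zero]
  have hD : D ∈ (∑ γ ∈ c.support, c γ • chebMv γ).support := by
    rw [MvPolynomial.mem_support_iff, hcoeff]
    exact mul_ne_zero (Finsupp.mem_support_iff.mp hβ) (coeff_chebMv_self_ne_zero β)
  simpa only [D, Finsupp.equivFunOnFinite_symm_sum] using le_totalDegree hD

end ChebMv

section CubeQuadraticModule

open MvPolynomial (X totalDegree_add totalDegree_smul_le totalDegree_pow totalDegree_sub)

variable {n r r' : ℕ} {p q : MvPolynomial (Fin n) ℝ}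

theorem memCubeQM.mono (h : memCubeQM n r p) (hr : r ≤ r') : memCubeQM n r' p := by
  obtain ⟨σ₀, σ, h₀, hσ, hd₀, hdσ, rfl⟩ := h
  exact ⟨σ₀, σ, h₀, hσ, hd₀.trans hr, fun i => (hdσ i).trans (by omega), rfl⟩

theorem memCubeQM_zero : memCubeQM n r 0 :=
  ⟨0, 0, .zero, fun _ => .zero, by simp, fun _ => by simp, by simp⟩

theorem memCubeQM.add (hp : memCubeQM n r p) (hq : memCubeQM n r q) :
    memCubeQM n r (p + q) := by
  obtain ⟨σ₀, σ, h₀, hσ, hd₀, hdσ, rfl⟩ := hp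
  obtain ⟨τ₀, τ, h₀', hτ, hd₀', hdτ, rfl⟩ := hq
  refine ⟨σ₀ + τ₀, σ + τ, h₀.add h₀', fun i => (hσ i).add (hτ i),
    (totalDegree_add _ _).trans (max_le hd₀ hd₀'),
    fun i => (totalDegree_add _ _).trans (max_le (hdσ i) (hdτ i)), ?_⟩
  simp only [Pi.add_apply, mul_add, Finset.sum_add_distrib]
  ring

theorem memCubeQM_sum {ι : Type*} {s : Finset ι} {f : ι → MvPolynomial (Fin n) ℝ}
    (h : ∀ i ∈ s, memCubeQM n r (f i)) : memCubeQM n r (∑ i ∈ s, f i) :=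
  Finset.sum_induction f (memCubeQM n r) (fun _ _ => memCubeQM.add) memCubeQM_zero h

theorem memCubeQM.smul {a : ℝ} (ha : 0 ≤ a) (h : memCubeQM n r p) : memCubeQM n r (a • p) := by
  obtain ⟨σ₀, σ, h₀, hσ, hd₀, hdσ, rfl⟩ := h
  have hC : IsSumSq (MvPolynomial.C a : MvPolynomial (Fin n) ℝ) :=
    IsSquare.isSumSq ⟨MvPolynomial.C √a, by rw [← MvPolynomial.C_mul, Real.mul_self_sqrt ha]⟩
  refine ⟨a • σ₀, fun i => a • σ i, ?_, fun i => ?_, (totalDegree_smul_le _ _).trans hd₀,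
    fun i => (totalDegree_smul_le _ _).trans (hdσ i), ?_⟩
  · rw [MvPolynomial.smul_eq_C_mul]; exact hC.mul h₀
  · show IsSumSq (a • σ i)
    rw [MvPolynomial.smul_eq_C_mul]; exact hC.mul (hσ i)
  · simp only [smul_add, Finset.smul_sum, mul_smul_comm]

theorem memCubeQM_sq (h : 2 * q.totalDegree ≤ r) : memCubeQM n r (q ^ 2) :=
  ⟨q ^ 2, 0, (IsSquare.sq q).isSumSq, fun _ => .zero,
    (totalDegree_pow q 2).trans (by omega), fun _ => by simp, by simp⟩

theorem memCubeQM_one_sub_chebMv_sq (α : Fin n → ℕ) :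
    memCubeQM n (2 * ∑ i, α i) (1 - chebMv α ^ 2) := by
  set t : Fin n → MvPolynomial (Fin n) ℝ :=
    fun i => Polynomial.aeval (X i) (Chebyshev.T ℝ (α i))
  set u : Fin n → MvPolynomial (Fin n) ℝ :=
    fun i => Polynomial.aeval (X i) (Chebyshev.U ℝ ((α i : ℤ) - 1))
  have hpell (i : Fin n) : 1 - t i ^ 2 = (1 - X i ^ 2) * u i ^ 2 :=
    Chebyshev.one_sub_aeval_T_sq ℝ (X i) (α i)
  have htelescope : 1 - chebMv α ^ 2 = ∑ i, (1 - t i ^ 2) * ∏ j ∈ univ with j < i, t j ^ 2 := by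
    have := Finset.prod_one_sub_ordered univ (fun i => 1 - t i ^ 2)
    simp only [sub_sub_cancel] at this
    rw [chebMv, ← Finset.prod_pow, this]
    ring
  refine ⟨0, fun i => (u i * ∏ j ∈ univ with j < i, t j) ^ 2, .zero,
    fun i => (IsSquare.sq _).isSumSq, by simp, fun i => ?_, ?_⟩
  · dsimp only
    rcases Nat.eq_zero_or_pos (α i) with h0 | hpos
    -- `U_{-1} = 0`, so this square vanishes; the degree count below needs `α i ≥ 1`.
    · simp [u, h0]
    have hu : (u i).totalDegree ≤ α i - 1 :=
      (MvPolynomial.totalDegree_aeval_X_le i _).trans (by simp [Chebyshev.natDegree_U])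
    have ht : (∏ j ∈ univ with j < i, t j).totalDegree ≤ ∑ j ∈ univ with j < i, α j :=
      totalDegree_prod_aeval_X_T_le α _
    have hsum : ∑ j ∈ univ with j < i, α j + α i ≤ ∑ j, α j := by
      rw [add_comm, ← Finset.sum_insert (by simp)]
      exact Finset.sum_le_sum_of_subset (subset_univ _)
    have hpow := totalDegree_pow (u i * ∏ j ∈ univ with j < i, t j) 2
    have hmul := MvPolynomial.totalDegree_mul (u i) (∏ j ∈ univ with j < i, t j)
    omega
  · rw [zero_add, htelescope]
    refine Finset.sum_congr rfl fun i _ => ?_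
    dsimp only
    rw [hpell, mul_pow, Finset.prod_pow, mul_assoc]

theorem memCubeQM_C_abs_sub_smul_chebMv (a : ℝ) (α : Fin n → ℕ) :
    memCubeQM n (2 * ∑ i, α i) (MvPolynomial.C |a| - a • chebMv α) := by
  obtain ⟨s, hs, ha⟩ : ∃ s : ℝ, s ^ 2 = 1 ∧ a = s * |a| := by
    rcases abs_choice a with h | h
    · exact ⟨1, by norm_num, by rw [h, one_mul]⟩
    · exact ⟨-1, by norm_num, by rw [h]; ring⟩
  have key : MvPolynomial.C |a| - a • chebMv α =
      (|a| / 2) • ((1 - s • chebMv α) ^ 2 + (1 - chebMv α ^ 2)) := by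
    have h1 : (MvPolynomial.C a : MvPolynomial (Fin n) ℝ) =
        MvPolynomial.C s * MvPolynomial.C |a| := by
      rw [← MvPolynomial.C_mul, ← ha]
    have h2 : (MvPolynomial.C s : MvPolynomial (Fin n) ℝ) ^ 2 = 1 := by rw [← map_pow, hs, map_one]
    have h3 : MvPolynomial.C |a| = 2 * (MvPolynomial.C (|a| / 2) : MvPolynomial (Fin n) ℝ) := by
      rw [← map_ofNat MvPolynomial.C 2, ← MvPolynomial.C_mul]; congr 1; ring
    simp only [MvPolynomial.smul_eq_C_mul]
    linear_combination (-chebMv α) * h1 + (-MvPolynomial.C (|a| / 2) * chebMv α ^ 2) * h2 +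
      (1 - MvPolynomial.C s * chebMv α) * h3
  rw [key]
  refine ((memCubeQM_sq ?_).add (memCubeQM_one_sub_chebMv_sq α)).smul (by positivity)
  have : (1 - s • chebMv α).totalDegree ≤ ∑ i, α i :=
    (totalDegree_sub _ _).trans <| max_le (by simp) <|
      (totalDegree_smul_le _ _).trans (totalDegree_chebMv_le α)
  omega

end CubeQuadraticModule

/-- For `p ∈ ℝ[x₁,…,xₙ]` with Chebyshev expansion `p = ∑_α c_α T_α`,
the polynomial `‖p‖_{1,cheb} - p` belongs to `Q(1-x₁², …, 1-xₙ²)_{2·deg p}`, where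
`‖p‖_{1,cheb} = ∑_α |c_α|`. -/
theorem chebNorm_sub_self_mem_quadraticModule (n : ℕ) (p : MvPolynomial (Fin n) ℝ)
    (c : (Fin n → ℕ) →₀ ℝ) (hp : p = ∑ α ∈ c.support, c α • chebMv α) :
    memCubeQM n (2 * p.totalDegree)
      (MvPolynomial.C (∑ α ∈ c.support, |c α|) - p) := by
  have hsplit : MvPolynomial.C (∑ α ∈ c.support, |c α|) - p =
      ∑ α ∈ c.support, (MvPolynomial.C |c α| - c α • chebMv α) := by
    rw [hp, map_sum, Finset.sum_sub_distrib]
  rw [hsplit]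
  refine memCubeQM_sum fun α hα => (memCubeQM_C_abs_sub_smul_chebMv (c α) α).mono ?_
  rw [hp]
  exact Nat.mul_le_mul_left 2 (sum_le_totalDegree_sum_smul_chebMv hα)
end

section
/- Let σ > 0, let 1 ≤ R, let δ ∈ (0,1), set b := (R+1)²/(4σ²), and let s be a univariate real polynomial such that |exp(−2t) − s(t)²| ≤ 3δ for all t ∈ [0,b]. Define K(x,y) := (1/(√(2π)σ)) · s((x−y)²/(4σ²))². Then for every k ∈ ℕ and every x ∈ [−1,1], | ∫_{−R}^{R} K(x,y) T_k(y) dy − ∫_{−R}^{R} K_G^σ(x,y) T_k(y) dy | ≤ 2R · (3δ/(√(2π)σ)) · max_{y ∈ [−R,R]} |T_k(y)|. Moreover, if k ≥ 1 and R ≤ 1 + 1/(10k²), then this quantity is at most 24δ/(√(2π)σ). -/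
open Polynomial Finset MeasureTheory

/-- The Gauss–Weierstrass kernel `K_G^σ(x,y) = (1/(√(2π)σ)) exp(-(x-y)²/(2σ²))`. -/
noncomputable def gaussKernel (σ x y : ℝ) : ℝ :=
  (Real.sqrt (2 * Real.pi) * σ)⁻¹ * Real.exp (-(x - y) ^ 2 / (2 * σ ^ 2))

/-- The SOS kernel `K(x,y) = (1/(√(2π)σ)) s((x-y)²/(4σ²))²`. -/
noncomputable def sosKernel (σ : ℝ) (s : Polynomial ℝ) (x y : ℝ) : ℝ :=
  (Real.sqrt (2 * Real.pi) * σ)⁻¹ * (s.eval ((x - y) ^ 2 / (4 * σ ^ 2))) ^ 2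

/-!
On `[-R, R]` the two kernels differ by `(√(2π)σ)⁻¹ (s(t)² - exp(-2t))` with
`t = (x - y)²/(4σ²) ∈ [0, (R + 1)²/(4σ²)]`, so the difference of the integrals is at most
the length `2R` of the interval times `3δ/(√(2π)σ)` times `max |T_k|`. For the second
bound, `T_k(cosh θ) = cosh (kθ)` and `1 + 1/(10k²) ≤ cosh (1/k)` give `|T_k| ≤ cosh 1 < 3`
on `[-R, R]`.
-/

namespace Polynomial.Chebyshev

open Real

theorem abs_eval_T_real_le_cosh (n : ℤ) {y θ : ℝ} (hy : |y| ≤ cosh θ) :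
    |(T ℝ n).eval y| ≤ cosh (n * θ) := by
  rcases le_total |y| 1 with hy1 | hy1
  · exact (abs_eval_T_real_le_one n hy1).trans (one_le_cosh _)
  have h_even : |(T ℝ n).eval y| = (T ℝ n).eval |y| := by
    have h_abs : |(T ℝ n).eval y| = |(T ℝ n).eval (|y|)| := by
      rcases abs_cases y with ⟨h, -⟩ | ⟨h, -⟩ <;> rw [h]
      simp [T_eval_neg, abs_mul]
    rw [h_abs, abs_of_nonneg (zero_le_one.trans (one_le_eval_T_real n hy1))]
  have h_arcosh : |arcosh (|y|)| ≤ |θ| := cosh_le_cosh.1 (by rwa [cosh_arcosh hy1])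
  rw [h_even, ← cosh_arcosh hy1, T_real_cosh, cosh_le_cosh, abs_mul, abs_mul]
  exact mul_le_mul_of_nonneg_left h_arcosh (abs_nonneg _)

theorem one_add_sq_div_four_le_cosh {θ : ℝ} (hθ : 0 ≤ θ) : 1 + θ ^ 2 / 4 ≤ cosh θ := by
  rw [cosh_eq]
  linarith [quadratic_le_exp_of_nonneg hθ, add_one_le_exp (-θ)]

theorem cosh_one_lt_three : cosh 1 < 3 := by
  rw [cosh_eq]
  linarith [exp_one_lt_d9, exp_le_one_iff.2 (by norm_num : (-1 : ℝ) ≤ 0)]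

theorem abs_eval_T_real_le_three (k : ℕ) {y : ℝ} (hy : |y| ≤ 1 + 1 / (10 * (k : ℝ) ^ 2)) :
    |(T ℝ k).eval y| ≤ 3 := by
  -- `θ = 1/k`; for `k = 0` both `1/(10k²)` and `θ` are `0` and the same computation applies.
  have h_cosh : 1 + 1 / (10 * (k : ℝ) ^ 2) ≤ cosh (k : ℝ)⁻¹ := by
    have h := one_add_sq_div_four_le_cosh (inv_nonneg.2 k.cast_nonneg)
    have : 1 / (10 * (k : ℝ) ^ 2) = (k : ℝ)⁻¹ ^ 2 / 10 := by ring
    linarith [sq_nonneg (k : ℝ)⁻¹]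
  have h_one : |(k : ℝ) * (k : ℝ)⁻¹| ≤ |1| := by
    rw [abs_one, abs_of_nonneg (by positivity)]
    exact mul_inv_le_one
  calc |(T ℝ k).eval y| ≤ cosh ((k : ℝ) * (k : ℝ)⁻¹) := by
        simpa using abs_eval_T_real_le_cosh k (hy.trans h_cosh)
    _ ≤ cosh 1 := cosh_le_cosh.2 h_one
    _ ≤ 3 := cosh_one_lt_three.le

end Polynomial.Chebyshev

theorem abs_intervalIntegral_mul_sub_le {f g h : ℝ → ℝ} {a b ε M : ℝ}
    (hf : IntervalIntegrable (fun y => f y * h y) volume a b)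
    (hg : IntervalIntegrable (fun y => g y * h y) volume a b)
    (hfg : ∀ y ∈ Set.uIoc a b, |f y - g y| ≤ ε) (hh : ∀ y ∈ Set.uIoc a b, |h y| ≤ M) :
    |(∫ y in a..b, f y * h y) - ∫ y in a..b, g y * h y| ≤ ε * M * |b - a| := by
  rw [← intervalIntegral.integral_sub hf hg, ← Real.norm_eq_abs]
  refine intervalIntegral.norm_integral_le_of_norm_le_const fun y hy => ?_
  rw [Real.norm_eq_abs, ← sub_mul, abs_mul]
  exact mul_le_mul (hfg y hy) (hh y hy) (abs_nonneg _) ((abs_nonneg _).trans (hfg y hy))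

theorem continuous_sosKernel (σ : ℝ) (s : Polynomial ℝ) (x : ℝ) :
    Continuous (sosKernel σ s x) := by
  unfold sosKernel
  fun_prop

theorem continuous_gaussKernel (σ x : ℝ) : Continuous (gaussKernel σ x) := by
  unfold gaussKernel
  fun_prop

theorem sosKernel_sub_gaussKernel (σ : ℝ) (s : Polynomial ℝ) (x y : ℝ) :
    sosKernel σ s x y - gaussKernel σ x y =
      (Real.sqrt (2 * Real.pi) * σ)⁻¹ * ((s.eval ((x - y) ^ 2 / (4 * σ ^ 2))) ^ 2 -
        Real.exp (-2 * ((x - y) ^ 2 / (4 * σ ^ 2)))) := by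
  unfold sosKernel gaussKernel
  ring

theorem abs_sosKernel_sub_gaussKernel_le {σ c ε : ℝ} (hσ : 0 ≤ σ) {s : Polynomial ℝ}
    (hs : ∀ t ∈ Set.Icc (0 : ℝ) (c ^ 2 / (4 * σ ^ 2)),
      |Real.exp (-2 * t) - (s.eval t) ^ 2| ≤ ε)
    {x y : ℝ} (hxy : |x - y| ≤ c) :
    |sosKernel σ s x y - gaussKernel σ x y| ≤ ε / (Real.sqrt (2 * Real.pi) * σ) := by
  have ht : (x - y) ^ 2 / (4 * σ ^ 2) ∈ Set.Icc (0 : ℝ) (c ^ 2 / (4 * σ ^ 2)) := by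
    refine ⟨by positivity, ?_⟩
    rw [← sq_abs]
    gcongr
  rw [sosKernel_sub_gaussKernel, abs_mul, abs_sub_comm, abs_inv,
    abs_of_nonneg (by positivity), inv_mul_eq_div]
  gcongr
  exact hs _ ht

theorem Continuous.le_ciSup_Icc {f : ℝ → ℝ} (hf : Continuous f) {a b y : ℝ}
    (hy : y ∈ Set.Icc a b) : f y ≤ ⨆ z : Set.Icc a b, f z :=
  le_ciSup (f := fun z : Set.Icc a b => f z) (isCompact_range (by fun_prop)).bddAbove ⟨y, hy⟩

theorem abs_integral_sosKernel_sub_gaussKernel_le {σ R ε : ℝ} (hσ : 0 ≤ σ) (hR : 0 ≤ R)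
    {s : Polynomial ℝ}
    (hs : ∀ t ∈ Set.Icc (0 : ℝ) ((R + 1) ^ 2 / (4 * σ ^ 2)),
      |Real.exp (-2 * t) - (s.eval t) ^ 2| ≤ ε)
    (p : Polynomial ℝ) {x : ℝ} (hx : x ∈ Set.Icc (-1 : ℝ) 1) :
    |(∫ y in (-R)..R, sosKernel σ s x y * p.eval y) -
        ∫ y in (-R)..R, gaussKernel σ x y * p.eval y| ≤
      ε / (Real.sqrt (2 * Real.pi) * σ) * (⨆ y : Set.Icc (-R) R, |p.eval (y : ℝ)|) *
        (2 * R) := by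
  have hIoc : Set.uIoc (-R) R ⊆ Set.Icc (-R) R :=
    (Set.uIoc_of_le (by linarith)).trans_subset Set.Ioc_subset_Icc_self
  have key := abs_intervalIntegral_mul_sub_le
    ((continuous_sosKernel σ s x).mul p.continuous |>.intervalIntegrable _ _)
    ((continuous_gaussKernel σ x).mul p.continuous |>.intervalIntegrable _ _)
    (fun y hy => abs_sosKernel_sub_gaussKernel_le hσ hs <| abs_sub_le_iff.2
      ⟨by linarith [hx.2, (hIoc hy).1], by linarith [hx.1, (hIoc hy).2]⟩)
    (fun y hy => p.continuous.abs.le_ciSup_Icc (hIoc hy))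
  rwa [abs_of_nonneg (by linarith : (0 : ℝ) ≤ R - -R), sub_neg_eq_add, ← two_mul] at key

/-- Let `σ > 0`, `R ≥ 1`, `δ ∈ (0,1)`, `b = (R+1)²/(4σ²)`, and let `s` be a
polynomial with `|exp(-2t) - s(t)²| ≤ 3δ` on `[0,b]`. Then for every `k` and `x ∈ [-1,1]`,
`|∫_{-R}^R K(x,y)T_k(y) dy - ∫_{-R}^R K_G^σ(x,y)T_k(y) dy|
  ≤ 2R (3δ/(√(2π)σ)) max_{y∈[-R,R]} |T_k(y)|`,
and moreover if `k ≥ 1` and `R ≤ 1 + 1/(10k²)` this is at most `24δ/(√(2π)σ)`. -/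
theorem sos_kernel_vs_gauss_kernel (σ : ℝ) (hσ : 0 < σ) (R : ℝ) (hR : 1 ≤ R)
    (δ : ℝ) (hδ : δ ∈ Set.Ioo (0 : ℝ) 1) (s : Polynomial ℝ)
    (hs : ∀ t ∈ Set.Icc (0 : ℝ) ((R + 1) ^ 2 / (4 * σ ^ 2)),
      |Real.exp (-2 * t) - (s.eval t) ^ 2| ≤ 3 * δ)
    (k : ℕ) (x : ℝ) (hx : x ∈ Set.Icc (-1 : ℝ) 1) :
    |(∫ y in (-R)..R, sosKernel σ s x y * (Chebyshev.T ℝ k).eval y) -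
        ∫ y in (-R)..R, gaussKernel σ x y * (Chebyshev.T ℝ k).eval y| ≤
      2 * R * (3 * δ / (Real.sqrt (2 * Real.pi) * σ)) *
        ⨆ y : Set.Icc (-R) R, |(Chebyshev.T ℝ k).eval (y : ℝ)| ∧
    (1 ≤ k → R ≤ 1 + 1 / (10 * (k : ℝ) ^ 2) →
      |(∫ y in (-R)..R, sosKernel σ s x y * (Chebyshev.T ℝ k).eval y) -
          ∫ y in (-R)..R, gaussKernel σ x y * (Chebyshev.T ℝ k).eval y| ≤
        24 * δ / (Real.sqrt (2 * Real.pi) * σ)) := by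
  have key := abs_integral_sosKernel_sub_gaussKernel_le hσ.le (by linarith) hs
    (Chebyshev.T ℝ k) hx
  refine ⟨key.trans_eq (by ring), fun hk hRk => key.trans ?_⟩
  have hT : ⨆ y : Set.Icc (-R) R, |(Chebyshev.T ℝ k).eval (y : ℝ)| ≤ 3 :=
    Real.iSup_le (fun y => Chebyshev.abs_eval_T_real_le_three k ((abs_le.2 y.2).trans hRk))
      (by norm_num)
  have hR' : R ≤ 11 / 10 := by
    have : 1 / (10 * (k : ℝ) ^ 2) ≤ 1 / 10 := by
      gcongr
      nlinarith [(Nat.one_le_cast (α := ℝ)).2 hk]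
    linarith
  have hε : 0 ≤ 3 * δ / (Real.sqrt (2 * Real.pi) * σ) :=
    div_nonneg (by linarith [hδ.1]) (by positivity)
  calc _ ≤ 3 * δ / (Real.sqrt (2 * Real.pi) * σ) * 3 * (2 * (11 / 10)) := by
        gcongr
    _ ≤ 24 * δ / (Real.sqrt (2 * Real.pi) * σ) := by
        rw [show 24 * δ / (Real.sqrt (2 * Real.pi) * σ) =
          3 * δ / (Real.sqrt (2 * Real.pi) * σ) * 8 by ring]
        linarith
end

section
/- Let σ > 0, R ≥ 1, let s be a univariate real polynomial, and let f be a univariate real polynomial that is nonnegative on the interval [−R,R]. Then the function x ↦ ∫_{−R}^{R} (1/(√(2π)σ)) · s((x−y)²/(4σ²))² · f(y) dy equals a polynomial in x of degree at most 4·deg(s) that is a sum of squares of polynomials. -/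
open Polynomial Finset MeasureTheory

/-!
Writing the kernel as `s(c (x - y)²) = ∑ₖ bₖ(y) xᵏ`, the integral against a weight `w ≥ 0`
equals `∑ⱼₖ Mⱼₖ xʲ xᵏ` for the Gram matrix `Mⱼₖ = ∫ w bⱼ bₖ`. This matrix is positive
semidefinite, so `M = Bᵀ B` and the integral is `∑ᵢ (∑ⱼ Bᵢⱼ xʲ)²`.
-/

open scoped MatrixOrder in
theorem Matrix.PosSemidef.isSumSq_sum_smul_mul {ι A : Type*} [Fintype ι] [CommSemiring A]
    [Algebra ℝ A] {M : Matrix ι ι ℝ} (hM : M.PosSemidef) (v : ι → A) :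
    IsSumSq (∑ j, ∑ k, M j k • (v j * v k)) := by
  classical
  obtain ⟨B, rfl⟩ := CStarAlgebra.nonneg_iff_eq_star_mul_self.mp hM.nonneg
  have h : ∑ j, ∑ k, (star B * B) j k • (v j * v k) =
      ∑ i, (∑ j, B i j • v j) * (∑ k, B i k • v k) := by
    simp only [Matrix.star_eq_conjTranspose, Matrix.mul_apply, Matrix.conjTranspose_apply,
      star_trivial, sum_smul, sum_mul_sum, smul_mul_smul_comm]
    conv_rhs => rw [sum_comm]
    exact sum_congr rfl fun _ _ => sum_comm
  exact h ▸ IsSumSq.sum_mul_self univ _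

section GramIntegral

open Matrix

variable {ι : Type*} [Fintype ι] {a b : ℝ} {w : ℝ → ℝ} {φ : ι → ℝ → ℝ}

theorem intervalIntegral.integral_mul_sum_sq (hw : IntervalIntegrable w volume a b)
    (hφ : ∀ j, Continuous (φ j)) (c : ι → ℝ) :
    ∫ y in a..b, w y * (∑ j, c j * φ j y) ^ 2 =
      ∑ j, ∑ k, c j * c k * ∫ y in a..b, w y * φ j y * φ k y := by
  have hint : ∀ p : ι × ι, IntervalIntegrable (fun y => w y * φ p.1 y * φ p.2 y) volume a b :=
    fun p => (hw.mul_continuousOn (hφ p.1).continuousOn).mul_continuousOn (hφ p.2).continuousOn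
  calc ∫ y in a..b, w y * (∑ j, c j * φ j y) ^ 2
      = ∫ y in a..b, ∑ p : ι × ι, c p.1 * c p.2 * (w y * φ p.1 y * φ p.2 y) := by
        refine intervalIntegral.integral_congr fun y _ => ?_
        rw [sq, sum_mul_sum, Fintype.sum_prod_type]
        simp only [mul_sum]
        exact sum_congr rfl fun _ _ => sum_congr rfl fun _ _ => by ring
    _ = ∑ p : ι × ι, c p.1 * c p.2 * ∫ y in a..b, w y * φ p.1 y * φ p.2 y := by
        rw [intervalIntegral.integral_finsetSum fun p _ => (hint p).const_mul _]
        simp only [intervalIntegral.integral_const_mul]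
    _ = _ := Fintype.sum_prod_type _

theorem Matrix.posSemidef_intervalIntegral_mul_mul (hab : a ≤ b) (hw₀ : ∀ y ∈ Set.Icc a b, 0 ≤ w y)
    (hw : IntervalIntegrable w volume a b) (hφ : ∀ j, Continuous (φ j)) :
    (Matrix.of fun j k => ∫ y in a..b, w y * φ j y * φ k y).PosSemidef := by
  refine .of_dotProduct_mulVec_nonneg ?_ fun v => ?_
  · ext j k
    simp only [conjTranspose_apply, of_apply, star_trivial]
    exact intervalIntegral.integral_congr fun y _ => by ring
  · have hform : star v ⬝ᵥ (Matrix.of fun j k => ∫ y in a..b, w y * φ j y * φ k y) *ᵥ v =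
        ∫ y in a..b, w y * (∑ j, v j * φ j y) ^ 2 := by
      rw [intervalIntegral.integral_mul_sum_sq hw hφ]
      simp only [dotProduct, mulVec, of_apply, star_trivial, mul_sum]
      exact sum_congr rfl fun _ _ => sum_congr rfl fun _ _ => by ring
    rw [hform]
    exact intervalIntegral.integral_nonneg hab fun y hy => mul_nonneg (hw₀ y hy) (sq_nonneg _)

end GramIntegral

theorem Polynomial.evalEval_eq_sum_range' {R : Type*} [CommSemiring R] {p : R[X][X]} {n : ℕ}
    (hn : p.natDegree < n) (x y : R) :
    p.evalEval x y = ∑ i ∈ range n, (p.coeff i).eval x * y ^ i := by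
  simp only [evalEval, eval_eq_sum_range' hn, eval_finsetSum, eval_mul, eval_pow, eval_C]

theorem exists_isSumSq_eq_intervalIntegral_mul_evalEval_sq {a b : ℝ} (hab : a ≤ b)
    {w : ℝ → ℝ} (hw₀ : ∀ y ∈ Set.Icc a b, 0 ≤ w y) (hw : IntervalIntegrable w volume a b)
    (Q : ℝ[X][X]) :
    ∃ g : ℝ[X], IsSumSq g ∧ g.natDegree ≤ 2 * Q.natDegree ∧
      ∀ x, g.eval x = ∫ y in a..b, w y * Q.evalEval y x ^ 2 := by
  set φ : Fin (Q.natDegree + 1) → ℝ → ℝ := fun j y => (Q.coeff j).eval y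
  have hφ : ∀ j, Continuous (φ j) := fun j => (Q.coeff j).continuous
  set M := Matrix.of fun j k => ∫ y in a..b, w y * φ j y * φ k y
  refine ⟨∑ j, ∑ k, M j k • (X ^ (j : ℕ) * X ^ (k : ℕ)),
    (Matrix.posSemidef_intervalIntegral_mul_mul hab hw₀ hw hφ).isSumSq_sum_smul_mul _, ?_,
    fun x => ?_⟩
  · refine natDegree_sum_le_of_forall_le _ _ fun j _ => natDegree_sum_le_of_forall_le _ _
      fun k _ => (natDegree_smul_le _ _).trans <| natDegree_mul_le.trans ?_
    simp only [natDegree_X_pow]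
    omega
  · have hQ (y : ℝ) : Q.evalEval y x = ∑ j : Fin (Q.natDegree + 1), x ^ (j : ℕ) * φ j y := by
      rw [evalEval_eq_sum_range' (Nat.lt_succ_self _), ← Fin.sum_univ_eq_sum_range]
      exact sum_congr rfl fun _ _ => mul_comm _ _
    simp only [hQ, intervalIntegral.integral_mul_sum_sq hw hφ, eval_finsetSum, eval_smul,
      eval_mul, eval_pow, eval_X, smul_eq_mul, M, Matrix.of_apply]
    exact sum_congr rfl fun _ _ => sum_congr rfl fun _ _ => mul_comm _ _

/-- `s(c (x - y)²)` as a polynomial in `x` over `R[y]`. -/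
noncomputable def Polynomial.compSqDist {R : Type*} [CommRing R] (s : R[X]) (c : R) : R[X][X] :=
  (s.map C).comp (C (C c) * (X - C X) ^ 2)

theorem Polynomial.evalEval_compSqDist {R : Type*} [CommRing R] (s : R[X]) (c x y : R) :
    (s.compSqDist c).evalEval y x = s.eval (c * (x - y) ^ 2) := by
  have hC : (evalRingHom y).comp C = RingHom.id R := RingHom.ext fun _ => eval_C
  rw [compSqDist, evalEval, eval_comp, eval_map, ← coe_evalRingHom, hom_eval₂, hC]
  simp

theorem Polynomial.natDegree_compSqDist_le {R : Type*} [CommRing R] (s : R[X]) (c : R) :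
    (s.compSqDist c).natDegree ≤ 2 * s.natDegree := by
  have hsq : (C (C c) * (X - C X) ^ 2 : R[X][X]).natDegree ≤ 2 :=
    (natDegree_C_mul_le _ _).trans <|
      (natDegree_pow_le_of_le 2 (natDegree_X_sub_C_le _)).trans_eq (mul_one 2)
  calc (s.compSqDist c).natDegree ≤ (s.map C).natDegree * 2 :=
        natDegree_comp_le.trans (Nat.mul_le_mul_left _ hsq)
    _ ≤ 2 * s.natDegree := by rw [mul_comm]; exact Nat.mul_le_mul_left _ natDegree_map_le

/-- Let `σ > 0`, `R ≥ 1`, let `s` be a univariate real polynomial and `f`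
a univariate real polynomial nonnegative on `[-R,R]`. Then
`x ↦ ∫_{-R}^R (1/(√(2π)σ)) s((x-y)²/(4σ²))² f(y) dy` agrees with a polynomial of degree at
most `4 deg s` that is a sum of squares of polynomials. -/
theorem sos_kernel_maps_nonneg_to_sos (σ : ℝ) (hσ : 0 < σ) (R : ℝ) (hR : 1 ≤ R)
    (s f : Polynomial ℝ) (hf : ∀ y ∈ Set.Icc (-R) R, 0 ≤ f.eval y) :
    ∃ g : Polynomial ℝ, IsSumSq g ∧ g.natDegree ≤ 4 * s.natDegree ∧
      ∀ x : ℝ, g.eval x =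
        ∫ y in (-R)..R,
          (Real.sqrt (2 * Real.pi) * σ)⁻¹ *
            (s.eval ((x - y) ^ 2 / (4 * σ ^ 2))) ^ 2 * f.eval y := by
  set c := (Real.sqrt (2 * Real.pi) * σ)⁻¹
  have hw₀ : ∀ y ∈ Set.Icc (-R) R, 0 ≤ c * f.eval y := fun y hy =>
    mul_nonneg (by positivity) (hf y hy)
  have hw : IntervalIntegrable (fun y => c * f.eval y) volume (-R) R :=
    (continuous_const.mul f.continuous).intervalIntegrable _ _
  obtain ⟨g, hg, hdeg, heval⟩ := exists_isSumSq_eq_intervalIntegral_mul_evalEval_sq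
    (by linarith) hw₀ hw (s.compSqDist (4 * σ ^ 2)⁻¹)
  refine ⟨g, hg, hdeg.trans ?_, fun x => ?_⟩
  · have := s.natDegree_compSqDist_le (4 * σ ^ 2)⁻¹
    omega
  · rw [heval]
    refine intervalIntegral.integral_congr fun y _ => ?_
    simp only [evalEval_compSqDist, div_eq_inv_mul]
    ring
end

section
/- Let n ≥ 1, let ε ≥ 0, let α ∈ ℕⁿ, and let p_1, …, p_n be univariate real polynomials such that ‖p_i − T_{α_i}‖_{1,cheb} ≤ ε for every i ∈ {1,…,n}. Then the multivariate polynomial Π_{i=1}^n p_i(x_i) satisfies ‖Π_{i=1}^n p_i(x_i) − T_α(x)‖_{1,cheb} ≤ ε · Σ_{i=0}^{n−1} (1+ε)^i. Moreover, if ε ≤ 1/n, then ‖Π_{i=1}^n p_i(x_i) − T_α(x)‖_{1,cheb} ≤ e·ε·n, where e is Euler's number. -/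
open Polynomial Finset

/-!
With `P_s = ∏_{i ∈ s} p_i(x_i)` and `T_s = ∏_{i ∈ s} T_{α_i}(x_i)`, adding a variable `j ∉ s` gives
`P_{s ∪ {j}} - T_{s ∪ {j}} = (p_j - T_{α_j}) P_s + T_{α_j} (P_s - T_s)`.
Chebyshev expansions in disjoint sets of variables multiply with their ℓ¹-norms multiplying, so
the error `r_k` after `k` variables satisfies `r_{k+1} ≤ ε (1 + r_k) + r_k`, whence
`r_n ≤ (1 + ε)^n - 1 = ε ∑_{i<n} (1 + ε)^i`. If `nε ≤ 1`, each `(1 + ε)^i ≤ e^{nε} ≤ e`.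
-/

namespace Finsupp

variable {ι : Type*}

noncomputable def l1Norm (C : ι →₀ ℝ) : ℝ := ∑ β ∈ C.support, |C β|

lemma l1Norm_eq_sum_of_support_subset {C : ι →₀ ℝ} {s : Finset ι} (h : C.support ⊆ s) :
    C.l1Norm = ∑ β ∈ s, |C β| :=
  sum_subset h fun β _ hβ => by simp [notMem_support_iff.mp hβ]

lemma l1Norm_nonneg (C : ι →₀ ℝ) : 0 ≤ C.l1Norm :=
  sum_nonneg fun _ _ => abs_nonneg _

lemma l1Norm_add_le (C D : ι →₀ ℝ) : (C + D).l1Norm ≤ C.l1Norm + D.l1Norm := by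
  classical
  rw [l1Norm_eq_sum_of_support_subset support_add,
    l1Norm_eq_sum_of_support_subset (subset_union_left (s₂ := D.support)),
    l1Norm_eq_sum_of_support_subset (subset_union_right (s₁ := C.support)),
    ← sum_add_distrib]
  exact Finset.sum_le_sum fun β _ => by rw [add_apply]; exact abs_add_le (C β) (D β)

lemma l1Norm_single (β : ι) (a : ℝ) : (single β a).l1Norm = |a| := by
  rw [l1Norm_eq_sum_of_support_subset support_single_subset]
  simp

lemma l1Norm_sum_le {κ : Type*} (s : Finset κ) (f : κ → ι →₀ ℝ) :
    (∑ x ∈ s, f x).l1Norm ≤ ∑ x ∈ s, (f x).l1Norm :=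
  le_sum_of_subadditive l1Norm (by simp [l1Norm]) l1Norm_add_le s f

end Finsupp

section ChebyshevExpansion

variable {n : ℕ}

noncomputable def chebOn (s : Finset (Fin n)) (β : Fin n → ℕ) : MvPolynomial (Fin n) ℝ :=
  ∏ i ∈ s, aeval (MvPolynomial.X i) (Chebyshev.T ℝ (β i))

lemma chebOn_univ : chebOn (univ : Finset (Fin n)) = chebMv := rfl

lemma chebOn_singleton (j : Fin n) (k : ℕ) :
    chebOn {j} (Pi.single j k) = aeval (MvPolynomial.X j) (Chebyshev.T ℝ k) := by
  simp [chebOn]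

lemma chebOn_union {s t : Finset (Fin n)} (hst : Disjoint s t) (β γ : Fin n → ℕ) :
    chebOn (s ∪ t) (s.piecewise β γ) = chebOn s β * chebOn t γ := by
  classical
  rw [chebOn, prod_union hst]
  congr 1 <;> refine prod_congr rfl fun i hi => ?_
  · rw [piecewise_eq_of_mem _ _ _ hi]
  · rw [piecewise_eq_of_notMem _ _ _ (disjoint_right.mp hst hi)]

def ChebL1Le (s : Finset (Fin n)) (q : MvPolynomial (Fin n) ℝ) (r : ℝ) : Prop :=
  ∃ C : (Fin n → ℕ) →₀ ℝ, q = Finsupp.linearCombination ℝ (chebOn s) C ∧ C.l1Norm ≤ r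

lemma chebL1Le_chebOn (s : Finset (Fin n)) (β : Fin n → ℕ) : ChebL1Le s (chebOn s β) 1 :=
  ⟨Finsupp.single β 1, by simp, by simp [Finsupp.l1Norm_single]⟩

lemma ChebL1Le.add {s : Finset (Fin n)} {q q' : MvPolynomial (Fin n) ℝ} {r r' : ℝ}
    (hq : ChebL1Le s q r) (hq' : ChebL1Le s q' r') : ChebL1Le s (q + q') (r + r') := by
  obtain ⟨C, rfl, hC⟩ := hq
  obtain ⟨D, rfl, hD⟩ := hq'
  exact ⟨C + D, (map_add _ _ _).symm, (Finsupp.l1Norm_add_le C D).trans (add_le_add hC hD)⟩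

lemma ChebL1Le.mul {s t : Finset (Fin n)} (hst : Disjoint s t) {q q' : MvPolynomial (Fin n) ℝ}
    {r r' : ℝ} (hq : ChebL1Le s q r) (hq' : ChebL1Le t q' r') :
    ChebL1Le (s ∪ t) (q * q') (r * r') := by
  classical
  obtain ⟨C, rfl, hC⟩ := hq
  obtain ⟨D, rfl, hD⟩ := hq'
  refine ⟨∑ β ∈ C.support, ∑ γ ∈ D.support,
    Finsupp.single (s.piecewise β γ) (C β * D γ), ?_, ?_⟩
  · simp only [map_sum, Finsupp.linearCombination_single, chebOn_union hst]
    simp only [Finsupp.linearCombination_apply, Finsupp.sum, sum_mul_sum, smul_mul_smul_comm]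
  · calc (∑ β ∈ C.support, ∑ γ ∈ D.support,
          Finsupp.single (s.piecewise β γ) (C β * D γ)).l1Norm
        ≤ ∑ β ∈ C.support, ∑ γ ∈ D.support, |C β| * |D γ| := by
          refine (Finsupp.l1Norm_sum_le _ _).trans (sum_le_sum fun β _ => ?_)
          refine (Finsupp.l1Norm_sum_le _ _).trans (sum_le_sum fun γ _ => ?_)
          rw [Finsupp.l1Norm_single, abs_mul]
      _ = C.l1Norm * D.l1Norm := by rw [Finsupp.l1Norm, Finsupp.l1Norm, sum_mul_sum]
      _ ≤ r * r' := mul_le_mul hC hD (Finsupp.l1Norm_nonneg D) ((C.l1Norm_nonneg).trans hC)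

lemma chebL1Le_aeval_X (j : Fin n) (K : Finset ℕ) (c : ℕ → ℝ) :
    ChebL1Le {j} (aeval (MvPolynomial.X j) (∑ k ∈ K, c k • Chebyshev.T ℝ k))
      (∑ k ∈ K, |c k|) := by
  refine ⟨∑ k ∈ K, Finsupp.single (Pi.single j k) (c k), ?_, ?_⟩
  · simp [map_sum, Finsupp.linearCombination_single, chebOn_singleton]
  · refine (Finsupp.l1Norm_sum_le _ _).trans (sum_le_sum fun k _ => ?_)
    rw [Finsupp.l1Norm_single]

lemma chebL1Le_prod_aeval_sub_chebOn {ε : ℝ} (p : Fin n → ℝ[X]) (α : Fin n → ℕ)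
    (s : Finset (Fin n))
    (hp : ∀ i ∈ s, ChebL1Le {i} (aeval (MvPolynomial.X i) (p i - Chebyshev.T ℝ (α i))) ε) :
    ChebL1Le s (∏ i ∈ s, aeval (MvPolynomial.X i) (p i) - chebOn s α) ((1 + ε) ^ s.card - 1) := by
  classical
  induction s using Finset.induction_on with
  | empty => exact ⟨0, by simp [chebOn], by simp [Finsupp.l1Norm]⟩
  | @insert j s hj ih =>
    have hs := ih fun i hi => hp i (mem_insert_of_mem hi)
    have hprod : ChebL1Le s (∏ i ∈ s, aeval (MvPolynomial.X i) (p i)) ((1 + ε) ^ s.card) := by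
      simpa using (chebL1Le_chebOn s α).add hs
    have hdisj : Disjoint {j} s := disjoint_singleton_left.mpr hj
    have hstep := ((hp j (mem_insert_self j s)).mul hdisj hprod).add
      ((chebL1Le_chebOn {j} α).mul hdisj hs)
    rw [← insert_eq] at hstep
    convert hstep using 1
    · simp only [chebOn, prod_insert hj, prod_singleton, map_sub]
      ring
    · rw [card_insert_of_notMem hj]
      ring

end ChebyshevExpansion

lemma mul_geom_sum_one_add_le {ε : ℝ} (hε : 0 ≤ ε) {n : ℕ} (h : n * ε ≤ 1) :
    ε * ∑ i ∈ range n, (1 + ε) ^ i ≤ Real.exp 1 * ε * n := by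
  have hpow : ∀ i ≤ n, (1 + ε) ^ i ≤ Real.exp 1 := fun i hi =>
    calc (1 + ε) ^ i ≤ Real.exp ε ^ i := by
          gcongr
          linarith [Real.add_one_le_exp ε]
      _ = Real.exp (i * ε) := (Real.exp_nat_mul ε i).symm
      _ ≤ Real.exp 1 := Real.exp_le_exp.mpr (le_trans (by gcongr) h)
  calc ε * ∑ i ∈ range n, (1 + ε) ^ i ≤ ε * ∑ _i ∈ range n, Real.exp 1 :=
        mul_le_mul_of_nonneg_left (sum_le_sum fun i hi => hpow i (mem_range.mp hi).le) hε
    _ = Real.exp 1 * ε * n := by rw [sum_const, card_range, nsmul_eq_mul]; ring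

theorem product_kernel_approximate_identity_general (n : ℕ) (ε : ℝ) (hε : 0 ≤ ε)
    (α : Fin n → ℕ) (p : Fin n → Polynomial ℝ) (m : Fin n → ℕ) (c : Fin n → ℕ → ℝ)
    (hexp : ∀ i, p i - Chebyshev.T ℝ (α i) =
      ∑ k ∈ Finset.range (m i + 1), c i k • Chebyshev.T ℝ k)
    (hnorm : ∀ i, ∑ k ∈ Finset.range (m i + 1), |c i k| ≤ ε) :
    ∃ C : (Fin n → ℕ) →₀ ℝ,
      (∏ i, Polynomial.aeval (MvPolynomial.X i) (p i)) - chebMv α =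
        ∑ β ∈ C.support, C β • chebMv β ∧
      (∑ β ∈ C.support, |C β|) ≤ ε * ∑ i ∈ Finset.range n, (1 + ε) ^ i ∧
      (ε ≤ 1 / n → (∑ β ∈ C.support, |C β|) ≤ Real.exp 1 * ε * n) := by
  have hfactor : ∀ i ∈ (univ : Finset (Fin n)),
      ChebL1Le {i} (aeval (MvPolynomial.X i) (p i - Chebyshev.T ℝ (α i))) ε := fun i _ => by
    obtain ⟨C, hC, hCε⟩ := chebL1Le_aeval_X i (range (m i + 1)) (c i)
    exact ⟨C, hexp i ▸ hC, hCε.trans (hnorm i)⟩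
  obtain ⟨C, hC, hCn⟩ := chebL1Le_prod_aeval_sub_chebOn p α univ hfactor
  rw [card_univ, Fintype.card_fin] at hCn
  rw [chebOn_univ] at hC
  have hgeom : (1 + ε) ^ n - 1 = ε * ∑ i ∈ range n, (1 + ε) ^ i := by
    simpa [mul_comm] using (geom_sum_mul (1 + ε) n).symm
  rw [hgeom] at hCn
  refine ⟨C, by rw [hC, Finsupp.linearCombination_apply, Finsupp.sum],
    hCn, fun hεn => hCn.trans (mul_geom_sum_one_add_le hε ?_)⟩
  calc (n : ℝ) * ε ≤ n * (1 / n) := by gcongr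
    _ ≤ 1 := by rw [mul_one_div]; exact div_self_le_one _

/-- Let `n ≥ 1`, `ε ≥ 0`, `α ∈ ℕⁿ`, and let `p₁, …, pₙ` be univariate
polynomials with `‖pᵢ - T_{αᵢ}‖_{1,cheb} ≤ ε` for each `i`. Then
`‖∏ᵢ pᵢ(xᵢ) - T_α(x)‖_{1,cheb} ≤ ε ∑_{i=0}^{n-1} (1+ε)^i`, and if moreover `ε ≤ 1/n` then
`‖∏ᵢ pᵢ(xᵢ) - T_α(x)‖_{1,cheb} ≤ e ε n`. -/
theorem product_kernel_approximate_identity (n : ℕ) (hn : 1 ≤ n) (ε : ℝ) (hε : 0 ≤ ε)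
    (α : Fin n → ℕ) (p : Fin n → Polynomial ℝ) (m : Fin n → ℕ) (c : Fin n → ℕ → ℝ)
    (hexp : ∀ i, p i - Chebyshev.T ℝ (α i) =
      ∑ k ∈ Finset.range (m i + 1), c i k • Chebyshev.T ℝ k)
    (hnorm : ∀ i, ∑ k ∈ Finset.range (m i + 1), |c i k| ≤ ε) :
    ∃ C : (Fin n → ℕ) →₀ ℝ,
      (∏ i, Polynomial.aeval (MvPolynomial.X i) (p i)) - chebMv α =
        ∑ β ∈ C.support, C β • chebMv β ∧
      (∑ β ∈ C.support, |C β|) ≤ ε * ∑ i ∈ Finset.range n, (1 + ε) ^ i ∧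
      (ε ≤ 1 / n → (∑ β ∈ C.support, |C β|) ≤ Real.exp 1 * ε * n) :=
  product_kernel_approximate_identity_general n ε hε α p m c hexp hnorm
end

section
/- Let R > 0 and d ∈ ℕ be such that R − x ∈ Q((1−x²)³)_d. Then for every integer k ≥ 1, all four polynomials R − xᵏ, R + xᵏ, R − T_k(x), and R + T_k(x) belong to Q((1−x²)³)_{dk}. -/
/-!
If `1 - t² = (1 - x²) u` with `u` a sum of squares, then substituting `x ↦ t` into a certificate
`p = σ₀ + (1 - x²)³ σ₁` gives the certificate `p ∘ t = σ₀ ∘ t + (1 - x²)³ (u³ · σ₁ ∘ t)`, and the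
degrees scale by `deg t`. Both `t = xᵏ` (with `u = ∑_{i<k} x²ⁱ`) and `t = T_k` (with `u = U_{k-1}²`,
by the Pell identity `T_k² + (1 - x²) U_{k-1}² = 1`) qualify, and `t = -x` turns the certificate
of `R - x` into one of `R + x`. The degree bookkeeping needs `d ≥ 6`, which the hypothesis forces:
for `d < 6` the multiplier `σ₁` is constant and must vanish, so `R - x` would be a sum of squares,
which it is not, being negative at `R + 1`.
-/

open Polynomial Finset

/-- Membership in the truncated quadratic module `Q((1-x²)³)_r`: `p = σ₀ + (1-x²)³ σ₁` with
`σ₀, σ₁` sums of squares, `deg σ₀ ≤ r` and `deg σ₁ ≤ r - 6`. -/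
def memStengleQM (r : ℕ) (p : Polynomial ℝ) : Prop :=
  ∃ σ₀ σ₁ : Polynomial ℝ, IsSumSq σ₀ ∧ IsSumSq σ₁ ∧
    σ₀.natDegree ≤ r ∧ σ₁.natDegree ≤ r - 6 ∧
    p = σ₀ + (1 - Polynomial.X ^ 2) ^ 3 * σ₁

theorem IsSumSq.map {A B F : Type*} [NonUnitalNonAssocSemiring A] [NonUnitalNonAssocSemiring B]
    [FunLike F A B] [NonUnitalRingHomClass F A B] (f : F) {s : A} (hs : IsSumSq s) :
    IsSumSq (f s) := by
  induction hs with
  | zero => simp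
  | sq_add a _ ih => simpa [map_add, map_mul] using IsSumSq.sq_add (f a) ih

theorem IsSumSq.comp {p : ℝ[X]} (hp : IsSumSq p) (t : ℝ[X]) : IsSumSq (p.comp t) :=
  hp.map (compRingHom t)

theorem IsSumSq.eval_nonneg {p : ℝ[X]} (hp : IsSumSq p) (x : ℝ) : 0 ≤ p.eval x :=
  (hp.map (evalRingHom x)).nonneg

theorem Polynomial.Chebyshev.T_sq_add_one_sub_X_sq_mul_U_sq_s19 (R : Type*) [CommRing R] (n : ℤ) :
    T R n ^ 2 + (1 - X ^ 2) * U R (n - 1) ^ 2 = 1 := by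
  have hS := congrArg (·.comp (2 * X : R[X])) (S_sq_add_S_sq R (n - 1))
  simp only [sub_comp, add_comp, mul_comp, pow_comp, X_comp, one_comp, S_comp_two_mul_X,
    sub_add_cancel] at hS
  rw [T_eq_U_sub_X_mul_U]
  linear_combination hS

theorem memStengleQM.isSumSq_of_lt_six {d : ℕ} {p : ℝ[X]} (h : memStengleQM d p) (hd : d < 6)
    (hp : p.coeff 6 = 0) : IsSumSq p := by
  obtain ⟨σ₀, σ₁, h₀, -, hd₀, hd₁, rfl⟩ := h
  obtain ⟨c, rfl⟩ : ∃ c, σ₁ = C c := ⟨_, eq_C_of_natDegree_eq_zero (by omega)⟩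
  have hcube : ((1 - X ^ 2) ^ 3 : ℝ[X]) = 1 - 3 * X ^ 2 + 3 * X ^ 4 - X ^ 6 := by ring
  have hσ₀ : σ₀.coeff 6 = 0 := coeff_eq_zero_of_natDegree_lt (by omega)
  have hc : c = 0 := by
    simp only [coeff_add, coeff_mul_C, hcube, hσ₀] at hp
    simpa [coeff_one, coeff_X_pow, ← C_ofNat, coeff_C_mul] using hp
  simpa [hc] using h₀

theorem six_le_of_memStengleQM_C_sub_X {d : ℕ} {R : ℝ} (h : memStengleQM d (C R - X)) :
    6 ≤ d := by
  by_contra! hd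
  have hnonneg := (h.isSumSq_of_lt_six hd (by simp [coeff_X])).eval_nonneg (R + 1)
  norm_num at hnonneg

theorem memStengleQM.comp {d k : ℕ} {p t u : ℝ[X]} (h : memStengleQM d p) (hd : 6 ≤ d)
    (ht : t.natDegree ≤ k) (hu : IsSumSq u) (hu_deg : u.natDegree ≤ 2 * k - 2)
    (htu : 1 - t ^ 2 = (1 - X ^ 2) * u) : memStengleQM (d * k) (p.comp t) := by
  obtain ⟨σ₀, σ₁, h₀, h₁, hd₀, hd₁, rfl⟩ := h
  refine ⟨σ₀.comp t, u ^ 3 * σ₁.comp t, h₀.comp t, ?_, ?_, ?_, ?_⟩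
  · rw [pow_three]
    exact (hu.mul (hu.mul hu)).mul (h₁.comp t)
  · exact natDegree_comp_le.trans (Nat.mul_le_mul hd₀ ht)
  · have hu3 : (u ^ 3).natDegree ≤ 3 * (2 * k - 2) := natDegree_pow_le.trans (by omega)
    have hσ₁t : (σ₁.comp t).natDegree ≤ (d - 6) * k :=
      natDegree_comp_le.trans (Nat.mul_le_mul hd₁ ht)
    have hsum : 3 * (2 * k - 2) + (d - 6) * k ≤ d * k - 6 := by
      obtain ⟨e, rfl⟩ := Nat.exists_eq_add_of_le' hd
      rcases Nat.eq_zero_or_pos k with rfl | hk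
      · simp
      rw [Nat.add_sub_cancel, add_mul]
      generalize e * k = m
      omega
    exact natDegree_mul_le.trans ((add_le_add hu3 hσ₁t).trans hsum)
  · simp only [add_comp, mul_comp, pow_comp, sub_comp, one_comp, X_comp, htu]
    ring

theorem memStengleQM.comp_neg_X {d : ℕ} {p : ℝ[X]} (h : memStengleQM d p) (hd : 6 ≤ d) :
    memStengleQM d (p.comp (-X)) := by
  simpa using h.comp (k := 1) hd (by simp) IsSumSq.one (by simp) (by ring)

theorem memStengleQM.comp_X_pow {d : ℕ} {p : ℝ[X]} (h : memStengleQM d p) (hd : 6 ≤ d)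
    (k : ℕ) : memStengleQM (d * k) (p.comp (X ^ k)) := by
  refine h.comp hd (by simp) (IsSumSq.sum_mul_self (range k) (X ^ ·)) ?_ ?_
  · refine natDegree_sum_le_of_forall_le _ _ fun i hi => ?_
    rw [← pow_add, natDegree_X_pow]
    have := mem_range.mp hi
    omega
  · have hgeom := geom_sum_mul (X ^ 2 : ℝ[X]) k
    simp only [← pow_mul, ← pow_add] at hgeom ⊢
    rw [Finset.sum_congr rfl fun i _ => by rw [← two_mul]]
    linear_combination hgeom

theorem memStengleQM.comp_chebyshevT {d : ℕ} {p : ℝ[X]} (h : memStengleQM d p) (hd : 6 ≤ d)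
    (k : ℕ) : memStengleQM (d * k) (p.comp (Chebyshev.T ℝ k)) := by
  refine h.comp hd (u := Chebyshev.U ℝ (k - 1) ^ 2) (by simp [Chebyshev.natDegree_T])
    (IsSquare.sq _).isSumSq ?_ ?_
  · refine natDegree_pow_le.trans ?_
    rw [Chebyshev.natDegree_U, sub_add_cancel, Int.natAbs_natCast]
    omega
  · linear_combination -Chebyshev.T_sq_add_one_sub_X_sq_mul_U_sq_s19 ℝ k

theorem stengle_module_powers_and_chebyshev_general (R : ℝ) (d : ℕ)
    (h : memStengleQM d (Polynomial.C R - Polynomial.X)) (k : ℕ) :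
    memStengleQM (d * k) (Polynomial.C R - Polynomial.X ^ k) ∧
    memStengleQM (d * k) (Polynomial.C R + Polynomial.X ^ k) ∧
    memStengleQM (d * k) (Polynomial.C R - Chebyshev.T ℝ k) ∧
    memStengleQM (d * k) (Polynomial.C R + Chebyshev.T ℝ k) := by
  have hd := six_le_of_memStengleQM_C_sub_X h
  have h' : memStengleQM d (C R + X) := by simpa using h.comp_neg_X hd
  refine ⟨?_, ?_, ?_, ?_⟩
  · simpa using h.comp_X_pow hd k
  · simpa using h'.comp_X_pow hd k
  · simpa using h.comp_chebyshevT hd k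
  · simpa using h'.comp_chebyshevT hd k

/-- Let `R > 0` and `d ∈ ℕ` with `R - x ∈ Q((1-x²)³)_d`. Then for every
integer `k ≥ 1`, the polynomials `R - xᵏ`, `R + xᵏ`, `R - T_k(x)` and `R + T_k(x)` all
belong to `Q((1-x²)³)_{dk}`. -/
theorem stengle_module_powers_and_chebyshev (R : ℝ) (hR : 0 < R) (d : ℕ)
    (h : memStengleQM d (Polynomial.C R - Polynomial.X)) (k : ℕ) (hk : 1 ≤ k) :
    memStengleQM (d * k) (Polynomial.C R - Polynomial.X ^ k) ∧
    memStengleQM (d * k) (Polynomial.C R + Polynomial.X ^ k) ∧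
    memStengleQM (d * k) (Polynomial.C R - Chebyshev.T ℝ k) ∧
    memStengleQM (d * k) (Polynomial.C R + Chebyshev.T ℝ k) :=
  stengle_module_powers_and_chebyshev_general R d h k
end
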